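/- arXiv:0801.0826 — 2 statements merged into one kernel-verified Lean document; each statement's English description precedes it below -/
import Mathlib

section
/- Let Ω be the (n+1)×(n+1) real symmetric matrix with block form Ω = [[ω_{ij}, ω], [ω^T, 0]], where (ω_{ij}) is an n×n real symmetric matrix and ω ∈ ℝ^n is nonzero. If Ω is invertible, then the set of ξ ∈ ℝ^n such that for some s ∈ ℝ the vector v(ξ,s) ∈ ℝ^n given by v_j(ξ,s) = Σ_i ω_{ij} ξ_i + s ω_j has rationally independent components (i.e., (v_1,…,v_n) is linearly independent over ℚ) is dense in ℝ^n. -/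
/-- A vector v ∈ ℝⁿ is rationally independent if no nonzero rational linear combination
of its components vanishes. -/
def RatIndep (n : ℕ) (v : Fin n → ℝ) : Prop :=
  ∀ q : Fin n → ℚ, q ≠ 0 → (∑ j, (q j : ℝ) * v j) ≠ 0

/-- The isoenergetic nondegeneracy matrix Ω = [[ω_{ij}, ω],[ωᵀ, 0]]. -/
def bigOmega (n : ℕ) (W : Matrix (Fin n) (Fin n) ℝ) (ω : Fin n → ℝ) :
    Matrix (Fin n ⊕ Unit) (Fin n ⊕ Unit) ℝ
  | Sum.inl i, Sum.inl j => W i j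
  | Sum.inl i, Sum.inr _ => ω i
  | Sum.inr _, Sum.inl j => ω j
  | Sum.inr _, Sum.inr _ => 0

/-- If Ω = [[ω_{ij}, ω],[ωᵀ,0]] is invertible (W symmetric, ω ≠ 0), then the set of
ξ ∈ ℝⁿ such that for some s the vector v_j = Σ_i ω_{ij} ξ_i + s ω_j has rationally
independent components is dense in ℝⁿ. -/
theorem stmt_1 (n : ℕ) (W : Matrix (Fin n) (Fin n) ℝ) (ω : Fin n → ℝ)
    (hsymm : ∀ i j, W i j = W j i) (hω : ω ≠ 0)
    (hΩ : (bigOmega n W ω).det ≠ 0) :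
    Dense {ξ : Fin n → ℝ |
      ∃ s : ℝ, RatIndep n (fun j => (∑ i, W i j * ξ i) + s * ω j)} := by
  -- the linear functional associated to q
  set g : (Fin n → ℚ) → ((Fin n → ℝ) × ℝ) → ℝ :=
    fun q p => ∑ j, (q j : ℝ) * ((∑ i, W i j * p.1 i) + p.2 * ω j) with hg
  -- linearity
  have hglin : ∀ q p p0 (t : ℝ), g q (p + t • p0) = g q p + t * g q p0 := by
    intro q p p0 t
    simp only [hg, Prod.fst_add, Prod.snd_add, Prod.smul_fst, Prod.smul_snd, Pi.add_apply,
      Pi.smul_apply, smul_eq_mul, Finset.mul_sum]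
    rw [← Finset.sum_add_distrib]
    refine Finset.sum_congr rfl fun j _ => ?_
    have : ∑ i, W i j * (p.1 i + t * p0.1 i)
        = (∑ i, W i j * p.1 i) + t * ∑ i, W i j * p0.1 i := by
      rw [Finset.mul_sum, ← Finset.sum_add_distrib]
      exact Finset.sum_congr rfl fun i _ => by ring
    rw [this]; ring
  -- continuity
  have hgcont : ∀ q, Continuous (g q) := by
    intro q
    apply continuous_finset_sum
    intro j _
    fun_prop
  -- nontriviality
  have hgne : ∀ q : Fin n → ℚ, q ≠ 0 → ∃ p0, g q p0 ≠ 0 := by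
    intro q hq
    by_contra h
    push_neg at h
    apply hq
    have hu : (bigOmega n W ω).mulVec
        (fun x => Sum.elim (fun j => (q j : ℝ)) (fun _ => 0) x) = 0 := by
      funext x
      cases x with
      | inl i =>
        have h1 := h (Pi.single i 1, 0)
        simp only [hg, mul_zero, zero_mul, add_zero, Pi.single_apply, mul_ite, mul_one,
          Finset.sum_ite_eq', Finset.mem_univ, if_true] at h1
        simp only [Matrix.mulVec, dotProduct, Fintype.sum_sum_type, Finset.univ_unique,
          Finset.sum_singleton, Sum.elim_inl, Sum.elim_inr, mul_zero, add_zero, Pi.zero_apply,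
          bigOmega]
        rw [← h1]
        exact Finset.sum_congr rfl fun j _ => by ring
      | inr _ =>
        have h1 := h (0, 1)
        simp only [hg, Pi.zero_apply, mul_zero, Finset.sum_const_zero, zero_add, one_mul] at h1
        simp only [Matrix.mulVec, dotProduct, Fintype.sum_sum_type, Finset.univ_unique,
          Finset.sum_singleton, Sum.elim_inl, Sum.elim_inr, mul_zero, add_zero, Pi.zero_apply,
          bigOmega]
        rw [← h1]
        exact Finset.sum_congr rfl fun j _ => by ring
    have := Matrix.eq_zero_of_mulVec_eq_zero hΩ hu
    funext j
    have hj := congrFun this (Sum.inl j)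
    simpa using hj
  -- each set is dense and open
  set Sq : {q : Fin n → ℚ // q ≠ 0} → Set ((Fin n → ℝ) × ℝ) :=
    fun q => {p | g q.1 p ≠ 0} with hSq
  have hopen : ∀ q, IsOpen (Sq q) := fun q =>
    isOpen_compl_iff.mpr (isClosed_singleton.preimage (hgcont q.1))
  have hdense : ∀ q, Dense (Sq q) := by
    intro q
    rw [Metric.dense_iff]
    intro p r hr
    obtain ⟨p0, hp0⟩ := hgne q.1 q.2
    by_cases hp : g q.1 p ≠ 0
    · exact ⟨p, Metric.mem_ball_self hr, hp⟩
    · push_neg at hp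
      set t : ℝ := r / (2 * (‖p0‖ + 1)) with ht
      have hpos : (0:ℝ) < ‖p0‖ + 1 := by positivity
      have htpos : 0 < t := by positivity
      refine ⟨p + t • p0, ?_, ?_⟩
      · rw [Metric.mem_ball, dist_eq_norm]
        simp only [add_sub_cancel_left]
        rw [norm_smul]
        have hc : t * (‖p0‖ + 1) = r / 2 := by
          rw [ht]; field_simp
        calc ‖t‖ * ‖p0‖ ≤ t * (‖p0‖ + 1) := by
              rw [Real.norm_of_nonneg htpos.le]
              exact mul_le_mul_of_nonneg_left (by linarith) htpos.le
          _ < r := by rw [hc]; linarith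
      · show g q.1 (p + t • p0) ≠ 0
        rw [hglin, hp, zero_add]
        exact mul_ne_zero htpos.ne' hp0
  have hBaire : Dense (⋂ q, Sq q) := dense_iInter_of_isOpen hopen hdense
  -- project
  rw [Metric.dense_iff]
  intro ξ r hr
  obtain ⟨p, hpball, hpS⟩ := (Metric.dense_iff.mp hBaire) (ξ, 0) r hr
  refine ⟨p.1, ?_, p.2, ?_⟩
  · rw [Metric.mem_ball] at hpball ⊢
    calc dist p.1 ξ ≤ dist p (ξ, 0) := le_max_left _ _
      _ < r := hpball
  · intro q hq
    have := Set.mem_iInter.mp hpS ⟨q, hq⟩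
    exact this
end

section
/- Let Φ : (ℝ^{2n}, Σ dξ_j ∧ dx_j) ⊇ U → ℝ^{2n} be a smooth symplectomorphism defined near the zero section {ξ = 0}, with Φ equal to the identity on the zero section. Write Φ(x, ξ) = (X(x,ξ), Ξ(x,ξ)). Then X(x,ξ) = x + O(|ξ|) and Ξ(x,ξ) = ξ + O(|ξ|²) as ξ → 0, uniformly for x in compact subsets of U ∩ {ξ=0}. -/
/-- The standard symplectic form on ℝⁿ × ℝⁿ (coordinates (x,ξ)): ω(v,w) = Σ v_ξ w_x − v_x w_ξ. -/
def sympForm (n : ℕ) (v w : (Fin n → ℝ) × (Fin n → ℝ)) : ℝ :=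
  ∑ j, (v.2 j * w.1 j - v.1 j * w.2 j)

section aux
variable {n : ℕ} {U : Set ((Fin n → ℝ) × (Fin n → ℝ))}
variable {Φ : ((Fin n → ℝ) × (Fin n → ℝ)) → ((Fin n → ℝ) × (Fin n → ℝ))}

/-- At a point of the zero section, the derivative fixes tangent vectors to the zero section. -/
theorem aux_fix (hU : IsOpen U) (hΦ : ContDiffOn ℝ (⊤ : ℕ∞) Φ U)
    (hfix : ∀ x : Fin n → ℝ, (x, (0 : Fin n → ℝ)) ∈ U → Φ (x, 0) = (x, 0))
    {x : Fin n → ℝ} (hx : (x, (0 : Fin n → ℝ)) ∈ U) (v : Fin n → ℝ) :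
    fderiv ℝ Φ (x, 0) (v, 0) = (v, 0) := by
  have hdiff : HasFDerivAt Φ (fderiv ℝ Φ (x, 0)) (x, 0) :=
    (((hΦ (x,0) hx).contDiffAt (hU.mem_nhds hx)).differentiableAt (by simp)).hasFDerivAt
  set ι : (Fin n → ℝ) →L[ℝ] ((Fin n → ℝ) × (Fin n → ℝ)) :=
    ContinuousLinearMap.inl ℝ _ _ with hι
  have hcomp : HasFDerivAt (fun y : Fin n → ℝ => Φ (y, 0))
      ((fderiv ℝ Φ (x, 0)).comp ι) x := by
    have := hdiff.comp x (ι.hasFDerivAt (x := x))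
    exact this
  have hopen : IsOpen {y : Fin n → ℝ | (y, (0 : Fin n → ℝ)) ∈ U} :=
    hU.preimage (by fun_prop)
  have heq : (fun y : Fin n → ℝ => Φ (y, 0)) =ᶠ[nhds x] fun y => (y, (0 : Fin n → ℝ)) := by
    filter_upwards [hopen.mem_nhds hx] with y hy using hfix y hy
  have hid : HasFDerivAt (fun y : Fin n → ℝ => (y, (0 : Fin n → ℝ))) ι x :=
    ι.hasFDerivAt
  have := (hcomp.congr_of_eventuallyEq heq.symm).unique hid
  calc fderiv ℝ Φ (x, 0) (v, 0) = ((fderiv ℝ Φ (x, 0)).comp ι) v := by simp [hι]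
    _ = ι v := by rw [this]
    _ = (v, 0) := rfl

theorem aux_snd (hU : IsOpen U) (hΦ : ContDiffOn ℝ (⊤ : ℕ∞) Φ U)
    (hsymp : ∀ p ∈ U, ∀ v w : (Fin n → ℝ) × (Fin n → ℝ),
      sympForm n (fderiv ℝ Φ p v) (fderiv ℝ Φ p w) = sympForm n v w)
    (hfix : ∀ x : Fin n → ℝ, (x, (0 : Fin n → ℝ)) ∈ U → Φ (x, 0) = (x, 0))
    {x : Fin n → ℝ} (hx : (x, (0 : Fin n → ℝ)) ∈ U) (v w : Fin n → ℝ) :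
    (fderiv ℝ Φ (x, 0) (v, w)).2 = w := by
  have key : ∀ w : Fin n → ℝ, (fderiv ℝ Φ (x, 0) (0, w)).2 = w := by
    intro w
    funext j
    have h := hsymp (x, 0) hx (Pi.single j 1, 0) (0, w)
    rw [aux_fix hU hΦ hfix hx (Pi.single j 1)] at h
    simp only [sympForm] at h
    simpa [Pi.single_apply] using h
  have hsplit : (v, w) = ((v, 0) : (Fin n → ℝ) × (Fin n → ℝ)) + (0, w) := by
    simp [Prod.ext_iff]
  rw [hsplit, map_add, Prod.snd_add, key]
  have h2 := aux_fix hU hΦ hfix hx v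
  rw [Prod.ext_iff] at h2
  rw [h2.2]
  simp

end aux

set_option maxHeartbeats 2000000 in
/-- A symplectomorphism Φ = (X,Ξ) of a neighborhood of the zero section {ξ=0} which is
the identity on the zero section satisfies X(x,ξ) = x + O(|ξ|) and Ξ(x,ξ) = ξ + O(|ξ|²),
uniformly for x in compact sets. -/
theorem stmt_11 (n : ℕ) (U : Set ((Fin n → ℝ) × (Fin n → ℝ))) (hU : IsOpen U)
    (Φ : ((Fin n → ℝ) × (Fin n → ℝ)) → ((Fin n → ℝ) × (Fin n → ℝ)))
    (hΦ : ContDiffOn ℝ (⊤ : ℕ∞) Φ U)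
    (hsymp : ∀ p ∈ U, ∀ v w : (Fin n → ℝ) × (Fin n → ℝ),
      sympForm n (fderiv ℝ Φ p v) (fderiv ℝ Φ p w) = sympForm n v w)
    (hfix : ∀ x : Fin n → ℝ, (x, (0 : Fin n → ℝ)) ∈ U → Φ (x, 0) = (x, 0)) :
    ∀ K : Set (Fin n → ℝ), IsCompact K → (∀ x ∈ K, (x, (0 : Fin n → ℝ)) ∈ U) →
      ∃ C ε : ℝ, 0 < C ∧ 0 < ε ∧ ∀ x ∈ K, ∀ ξ : Fin n → ℝ, ‖ξ‖ ≤ ε → (x, ξ) ∈ U →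
        ‖(Φ (x, ξ)).1 - x‖ ≤ C * ‖ξ‖ ∧ ‖(Φ (x, ξ)).2 - ξ‖ ≤ C * ‖ξ‖ ^ 2 := by
  intro K hK hKU
  have hdiff : ∀ p ∈ U, HasFDerivAt Φ (fderiv ℝ Φ p) p := fun p hp =>
    (((hΦ p hp).contDiffAt (hU.mem_nhds hp)).differentiableAt (by simp)).hasFDerivAt
  have hΦ' : ContDiffOn ℝ (⊤ : ℕ∞) (fderiv ℝ Φ) U := hΦ.fderiv_of_isOpen hU (by simp)
  have hdiff' : ∀ p ∈ U, HasFDerivAt (fderiv ℝ Φ) (fderiv ℝ (fderiv ℝ Φ) p) p := fun p hp =>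
    (((hΦ' p hp).contDiffAt (hU.mem_nhds hp)).differentiableAt (by simp)).hasFDerivAt
  have hcont1 : ContinuousOn (fderiv ℝ Φ) U := hΦ.continuousOn_fderiv_of_isOpen hU (by simp)
  have hcont2 : ContinuousOn (fderiv ℝ (fderiv ℝ Φ)) U :=
    hΦ'.continuousOn_fderiv_of_isOpen hU (by simp)
  set T : Set ((Fin n → ℝ) × (Fin n → ℝ)) := (fun x => (x, (0 : Fin n → ℝ))) '' K with hT
  have hTc : IsCompact T := hK.image (continuous_id.prodMk continuous_const)
  have hTU : T ⊆ U := by rintro p ⟨x, hx, rfl⟩; exact hKU x hx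
  obtain ⟨ε, hε, hVU⟩ := hTc.exists_cthickening_subset_open hU hTU
  set V : Set ((Fin n → ℝ) × (Fin n → ℝ)) := Metric.cthickening ε T with hV
  have hVc : IsCompact V := hTc.cthickening
  obtain ⟨C1, hC1⟩ := hVc.exists_bound_of_continuousOn (hcont1.mono hVU)
  obtain ⟨M, hM⟩ := hVc.exists_bound_of_continuousOn (f := fderiv ℝ (fderiv ℝ Φ)) (hcont2.mono hVU)
  set C1' := max C1 0 with hC1'def
  set M' := max M 0 with hM'def
  refine ⟨max C1' M' + 1, ε, by positivity, hε, ?_⟩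
  intro x hx ξ hξ hxξ
  have hmemT : (x, (0:Fin n → ℝ)) ∈ T :=
    Set.mem_image_of_mem (fun y : Fin n → ℝ => (y, (0:Fin n → ℝ))) hx
  have hball : Metric.closedBall ((x, (0:Fin n → ℝ))) ε ⊆ V := by
    rw [hV]; exact Metric.closedBall_subset_cthickening hmemT ε
  have hballU : Metric.closedBall ((x, (0:Fin n → ℝ))) ε ⊆ U := hball.trans hVU
  have hconv : Convex ℝ (Metric.closedBall ((x, (0:Fin n → ℝ))) ε) := convex_closedBall _ _
  have hx0mem : (x, (0:Fin n → ℝ)) ∈ Metric.closedBall ((x, (0:Fin n → ℝ))) ε :=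
    Metric.mem_closedBall_self hε.le
  have hxξmem : ((x, ξ) : (Fin n → ℝ) × (Fin n → ℝ)) ∈
      Metric.closedBall ((x, (0:Fin n → ℝ))) ε := by
    rw [Metric.mem_closedBall, dist_eq_norm]
    simpa [Prod.norm_def] using hξ
  have hnorm : ‖((x, ξ) : (Fin n → ℝ) × (Fin n → ℝ)) - (x, (0:Fin n → ℝ))‖ = ‖ξ‖ := by
    simp [Prod.norm_def]
  have hx0U : (x, (0:Fin n → ℝ)) ∈ U := hKU x hx
  have est1 : ‖Φ (x, ξ) - Φ (x, 0)‖ ≤ C1' * ‖ξ‖ := by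
    have := Convex.norm_image_sub_le_of_norm_hasFDerivWithin_le
      (C := C1') (f := Φ) (f' := fderiv ℝ Φ) (s := Metric.closedBall ((x, (0:Fin n → ℝ))) ε)
      (fun p hp => (hdiff p (hballU hp)).hasFDerivWithinAt)
      (fun p hp => le_trans (hC1 p (hball hp)) (le_max_left _ _))
      hconv hx0mem hxξmem
    rwa [hnorm] at this
  have lip : ∀ p ∈ Metric.closedBall ((x, (0:Fin n → ℝ))) ε,
      ‖fderiv ℝ Φ p - fderiv ℝ Φ (x, 0)‖ ≤ M' * ‖p - (x, (0:Fin n → ℝ))‖ :=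
    fun p hp => Convex.norm_image_sub_le_of_norm_hasFDerivWithin_le
      (C := M') (f := fderiv ℝ Φ) (f' := fderiv ℝ (fderiv ℝ Φ))
      (s := Metric.closedBall ((x, (0:Fin n → ℝ))) ε)
      (fun q hq => (hdiff' q (hballU hq)).hasFDerivWithinAt)
      (fun q hq => le_trans (hM q (hball hq)) (le_max_left _ _))
      hconv hx0mem hp
  set A := fderiv ℝ Φ (x, (0:Fin n → ℝ)) with hA
  have hA2 : ∀ v w : Fin n → ℝ, (A (v, w)).2 = w := fun v w =>
    aux_snd hU hΦ hsymp hfix hx0U v w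
  have hsndA : (ContinuousLinearMap.snd ℝ (Fin n → ℝ) (Fin n → ℝ)).comp A
      = ContinuousLinearMap.snd ℝ (Fin n → ℝ) (Fin n → ℝ) := by
    ext p
    · exact congrFun (hA2 _ _) _
    · exact congrFun (hA2 _ _) _
  have hg : ∀ p ∈ U, HasFDerivAt (fun q : (Fin n → ℝ) × (Fin n → ℝ) => (Φ q).2 - q.2)
      ((ContinuousLinearMap.snd ℝ (Fin n → ℝ) (Fin n → ℝ)).comp (fderiv ℝ Φ p - A)) p := by
    intro p hp
    have h1 : HasFDerivAt (fun q => (Φ q).2)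
        ((ContinuousLinearMap.snd ℝ (Fin n → ℝ) (Fin n → ℝ)).comp (fderiv ℝ Φ p)) p :=
      (hdiff p hp).snd
    have h2 := h1.sub (hasFDerivAt_snd (𝕜 := ℝ)
      (E := Fin n → ℝ) (F := Fin n → ℝ) (p := p))
    have heq : (ContinuousLinearMap.snd ℝ (Fin n → ℝ) (Fin n → ℝ)).comp (fderiv ℝ Φ p - A)
        = (ContinuousLinearMap.snd ℝ (Fin n → ℝ) (Fin n → ℝ)).comp (fderiv ℝ Φ p)
          - ContinuousLinearMap.snd ℝ (Fin n → ℝ) (Fin n → ℝ) := by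
      rw [ContinuousLinearMap.comp_sub, hsndA]
    rw [heq]
    exact h2
  have hsball : Metric.closedBall ((x, (0:Fin n → ℝ))) ‖ξ‖ ⊆
      Metric.closedBall ((x, (0:Fin n → ℝ))) ε := Metric.closedBall_subset_closedBall hξ
  have hxξmem2 : ((x, ξ) : (Fin n → ℝ) × (Fin n → ℝ)) ∈
      Metric.closedBall ((x, (0:Fin n → ℝ))) ‖ξ‖ := by
    rw [Metric.mem_closedBall, dist_eq_norm, hnorm]
  have est2 : ‖((Φ (x, ξ)).2 - ξ) - ((Φ (x, 0)).2 - 0)‖ ≤ (M' * ‖ξ‖) * ‖ξ‖ := by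
    have := Convex.norm_image_sub_le_of_norm_hasFDerivWithin_le
      (C := M' * ‖ξ‖) (f := fun q : (Fin n → ℝ) × (Fin n → ℝ) => (Φ q).2 - q.2)
      (f' := fun p => (ContinuousLinearMap.snd ℝ (Fin n → ℝ) (Fin n → ℝ)).comp
        (fderiv ℝ Φ p - A))
      (s := Metric.closedBall ((x, (0:Fin n → ℝ))) ‖ξ‖)
      (fun p hp => (hg p (hballU (hsball hp))).hasFDerivWithinAt)
      (fun p hp => by
        have hcomp1 : ‖(ContinuousLinearMap.snd ℝ (Fin n → ℝ) (Fin n → ℝ)).comp (fderiv ℝ Φ p - A)‖ ≤ ‖ContinuousLinearMap.snd ℝ (Fin n → ℝ) (Fin n → ℝ)‖ * ‖fderiv ℝ Φ p - A‖ :=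
          ContinuousLinearMap.opNorm_comp_le _ _
        calc ‖(ContinuousLinearMap.snd ℝ (Fin n → ℝ) (Fin n → ℝ)).comp (fderiv ℝ Φ p - A)‖
            ≤ ‖ContinuousLinearMap.snd ℝ (Fin n → ℝ) (Fin n → ℝ)‖ * ‖fderiv ℝ Φ p - A‖ :=
              hcomp1
          _ ≤ 1 * ‖fderiv ℝ Φ p - A‖ :=
              mul_le_mul_of_nonneg_right (ContinuousLinearMap.norm_snd_le _ _ _) (norm_nonneg _)
          _ = ‖fderiv ℝ Φ p - A‖ := one_mul _
          _ ≤ M' * ‖p - (x, (0:Fin n → ℝ))‖ := lip p (hsball hp)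
          _ ≤ M' * ‖ξ‖ :=
              mul_le_mul_of_nonneg_left (by rw [← dist_eq_norm]; exact hp)
                (le_max_right M 0))
      (convex_closedBall _ _) (Metric.mem_closedBall_self (norm_nonneg ξ)) hxξmem2
    rwa [hnorm] at this
  rw [hfix x hx0U] at est2 est1
  constructor
  · have hfst : (Φ (x, ξ)).1 - x
        = (Φ (x, ξ) - ((x, (0:Fin n → ℝ)) : (Fin n → ℝ) × (Fin n → ℝ))).1 := rfl
    rw [hfst]
    calc ‖(Φ (x, ξ) - ((x, (0:Fin n → ℝ)) : (Fin n → ℝ) × (Fin n → ℝ))).1‖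
        ≤ ‖Φ (x, ξ) - ((x, (0:Fin n → ℝ)) : (Fin n → ℝ) × (Fin n → ℝ))‖ := norm_fst_le _
      _ ≤ C1' * ‖ξ‖ := est1
      _ ≤ (max C1' M' + 1) * ‖ξ‖ := by
          gcongr
          exact le_add_of_le_of_nonneg (le_max_left _ _) zero_le_one
  · have h3 : ‖(Φ (x, ξ)).2 - ξ‖ ≤ M' * ‖ξ‖ * ‖ξ‖ := by simpa using est2
    calc ‖(Φ (x, ξ)).2 - ξ‖ ≤ M' * ‖ξ‖ * ‖ξ‖ := h3
      _ = M' * ‖ξ‖ ^ 2 := by ring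
      _ ≤ (max C1' M' + 1) * ‖ξ‖ ^ 2 := by
          gcongr
          exact le_add_of_le_of_nonneg (le_max_right _ _) zero_le_one
end
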